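/- arXiv:2206.01099 — 7 statements merged into one kernel-verified Lean document; each statement's English description precedes it below -/
import Mathlib

section
/- Let M = Z ⊕ Z as a trivially G-graded Z-module and let P be the submodule generated by (2,0). Then (P :_Z M) = {0}, so P is a graded pseudo weakly prime submodule, but P is not a graded weakly prime submodule of M. Hence the converse of the preceding inclusion fails. -/
/-- Let `M = ℤ ⊕ ℤ` be a trivially `G`-graded `ℤ`-module (so every element is
homogeneous and every submodule is graded) and `P` the submodule generated by
`(2,0)`. Then `(P :_ℤ M) = {0}`, the zero ideal is a (graded) weakly prime ideal
of `ℤ` (so `P` is graded pseudo weakly prime), but `P` is not a (graded) weakly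
prime submodule of `M`. -/
theorem stmt1 (P : Submodule ℤ (ℤ × ℤ))
    (hP : P = Submodule.span ℤ {((2 : ℤ), (0 : ℤ))}) :
    P.colon ⊤ = ⊥ ∧
    (∀ a b : ℤ, a * b ≠ 0 → a * b ∈ P.colon ⊤ → a ∈ P.colon ⊤ ∨ b ∈ P.colon ⊤) ∧
    ¬ (∀ (r : ℤ) (m : ℤ × ℤ), r • m ≠ 0 → r • m ∈ P → m ∈ P ∨ r ∈ P.colon ⊤) := by
  have hcolon : P.colon ⊤ = ⊥ := by
    ext r
    simp only [Ideal.mem_bot, Submodule.mem_colon, Submodule.mem_top, forall_true_left]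
    constructor
    · intro h
      have := h ((0 : ℤ), (1 : ℤ)) (Submodule.mem_top (R := ℤ))
      rw [hP, Submodule.mem_span_singleton] at this
      obtain ⟨a, ha⟩ := this
      have h2 := congrArg Prod.snd ha
      simpa using h2.symm
    · rintro rfl p
      simp
  refine ⟨hcolon, ?_, ?_⟩
  · intro a b hab h
    rw [hcolon] at h
    exact absurd h (by simpa using hab)
  · intro h
    have := h 2 (1, 0) (by norm_num [Prod.ext_iff]) (by
      rw [hP, Submodule.mem_span_singleton]
      exact ⟨1, by norm_num⟩)
    rcases this with h1 | h2
    · rw [hP, Submodule.mem_span_singleton] at h1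
      obtain ⟨a, ha⟩ := h1
      have := congrArg Prod.fst ha
      simp [Prod.smul_def] at this
      omega
    · rw [hcolon] at h2
      simp at h2
end

section
/- If M is a G-graded weakly topological R-module and P is a graded submodule of M, then the quotient module M/P is a G-graded weakly topological R-module. -/
variable {G : Type*} [AddCommGroup G] [DecidableEq G]
variable {R : Type*} [CommRing R] (𝒜 : G → AddSubgroup R) [GradedRing 𝒜]
variable {M : Type*} [AddCommGroup M] [Module R M] (ℳ : G → AddSubgroup M)
  [SetLike.GradedSMul 𝒜 ℳ] [DirectSum.Decomposition ℳ]

/-- A submodule of a graded module is graded if it contains all homogeneous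
components of each of its elements. -/
def IsGradedSubmodule (N : Submodule R M) : Prop :=
  ∀ (g : G) (m : M), m ∈ N → (DirectSum.decompose ℳ m g : M) ∈ N

/-- An ideal of a graded ring is graded if it contains all homogeneous
components of each of its elements. -/
def IsGradedIdeal (I : Ideal R) : Prop :=
  ∀ (g : G) (r : R), r ∈ I → (DirectSum.decompose 𝒜 r g : R) ∈ I

/-- Graded weakly prime ideal: a proper graded ideal `I` such that for homogeneous
`a, b` with `0 ≠ a * b ∈ I`, either `a ∈ I` or `b ∈ I`. -/
def IsGWPrimeIdeal (I : Ideal R) : Prop :=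
  IsGradedIdeal 𝒜 I ∧ I ≠ ⊤ ∧
    ∀ a b : R, SetLike.IsHomogeneousElem 𝒜 a → SetLike.IsHomogeneousElem 𝒜 b →
      a * b ≠ 0 → a * b ∈ I → a ∈ I ∨ b ∈ I

/-- Graded weakly prime submodule. -/
def IsGWPrimeSubmodule (P : Submodule R M) : Prop :=
  IsGradedSubmodule ℳ P ∧ P ≠ ⊤ ∧
    ∀ (r : R) (m : M), SetLike.IsHomogeneousElem 𝒜 r → SetLike.IsHomogeneousElem ℳ m →
      r • m ≠ 0 → r • m ∈ P → m ∈ P ∨ r ∈ P.colon ⊤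

/-- Graded pseudo weakly prime submodule: a graded submodule `P` with
`(P :_R M)` a graded weakly prime ideal. -/
def IsGPWPrime (P : Submodule R M) : Prop :=
  IsGradedSubmodule ℳ P ∧ IsGWPrimeIdeal 𝒜 (P.colon ⊤)

/-- Graded pseudo weakly semiprime: a (nonempty) intersection of graded pseudo
weakly prime submodules. -/
def IsGPWSemiprime (N : Submodule R M) : Prop :=
  ∃ S : Set (Submodule R M), S.Nonempty ∧ (∀ P ∈ S, IsGPWPrime 𝒜 ℳ P) ∧ N = sInf S

/-- `M` is a graded weakly topological module: every graded pseudo weakly prime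
submodule is graded weakly extraordinary. -/
def IsGWTopologicalModule : Prop :=
  ∀ P : Submodule R M, IsGPWPrime 𝒜 ℳ P →
    ∀ I J : Submodule R M, IsGPWSemiprime 𝒜 ℳ I → IsGPWSemiprime 𝒜 ℳ J →
      I ⊓ J ≠ ⊥ → I ⊓ J ≤ P → I ≤ P ∨ J ≤ P

/-- The set `χ(N)` of graded pseudo weakly prime submodules containing `N`. -/
def chiSet (N : Submodule R M) : Set (Submodule R M) :=
  {Q | IsGPWPrime 𝒜 ℳ Q ∧ N ≤ Q}

/-- The graded pseudo weakly prime spectrum `Υ_M`. -/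
def Ups := {P : Submodule R M // IsGPWPrime 𝒜 ℳ P}

/-- `χ(N)` as a subset of the spectrum. -/
def chiT (N : Submodule R M) : Set (Ups 𝒜 ℳ) := {Q | N ≤ Q.1}

/-- The Zariski topology on `Υ_M`, whose closed sets are the `χ(N)` for graded
submodules `N`. -/
def zariski : TopologicalSpace (Ups 𝒜 ℳ) :=
  TopologicalSpace.generateFrom
    {U | ∃ N : Submodule R M, IsGradedSubmodule ℳ N ∧ U = (chiT 𝒜 ℳ N)ᶜ}

/-- If `M` is a graded weakly topological module and `P` is a graded submodule,
then `M/P` is a graded weakly topological module (for the induced grading, under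
which graded submodules of `M/P` correspond to graded submodules of `M`
containing `P`). -/
theorem stmt6 (P : Submodule R M) (hP : IsGradedSubmodule ℳ P)
    (ℳ' : G → AddSubgroup (M ⧸ P)) [SetLike.GradedSMul 𝒜 ℳ']
    [DirectSum.Decomposition ℳ']
    (hcorr : ∀ N : Submodule R (M ⧸ P),
      IsGradedSubmodule ℳ' N ↔ IsGradedSubmodule ℳ (N.comap P.mkQ))
    (h : IsGWTopologicalModule 𝒜 ℳ) :
    IsGWTopologicalModule 𝒜 ℳ' := by
  intro Q hQ I J hI hJ hne hle
  have hsurj : Function.Surjective P.mkQ := Submodule.mkQ_surjective P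
  have colon_eq : ∀ N : Submodule R (M ⧸ P),
      (N.comap P.mkQ).colon ⊤ = N.colon ⊤ := by
    intro N
    ext r
    simp only [Submodule.mem_colon]
    constructor
    · intro hr x _
      obtain ⟨m, rfl⟩ := hsurj x
      have := hr m (Set.mem_univ _)
      simpa using this
    · intro hr m _
      have := hr (P.mkQ m) (Set.mem_univ _)
      simpa using this
  have pull : ∀ Q : Submodule R (M ⧸ P), IsGPWPrime 𝒜 ℳ' Q →
      IsGPWPrime 𝒜 ℳ (Q.comap P.mkQ) := by
    rintro Q ⟨hg, hw⟩
    refine ⟨(hcorr Q).mp hg, ?_⟩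
    rw [colon_eq]; exact hw
  have pulls : ∀ N : Submodule R (M ⧸ P), IsGPWSemiprime 𝒜 ℳ' N →
      IsGPWSemiprime 𝒜 ℳ (N.comap P.mkQ) := by
    rintro N ⟨S, hSne, hSp, rfl⟩
    refine ⟨(Submodule.comap P.mkQ) '' S, hSne.image _, ?_, ?_⟩
    · rintro _ ⟨Q, hQS, rfl⟩; exact pull Q (hSp Q hQS)
    · ext x
      simp [Submodule.mem_sInf, Submodule.mem_comap]
  have hkey := h (Q.comap P.mkQ) (pull Q hQ) (I.comap P.mkQ) (J.comap P.mkQ)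
      (pulls I hI) (pulls J hJ) ?_ ?_
  · rcases hkey with h1 | h1
    · exact Or.inl ((Submodule.comap_le_comap_iff_of_surjective hsurj).mp h1)
    · exact Or.inr ((Submodule.comap_le_comap_iff_of_surjective hsurj).mp h1)
  · rw [← Submodule.comap_inf]
    intro hb
    apply hne
    have hmc := Submodule.map_comap_eq_of_surjective hsurj (I ⊓ J)
    rw [hb, Submodule.map_bot] at hmc
    exact hmc.symm
  · rw [← Submodule.comap_inf]
    exact Submodule.comap_mono hle
end

section
/- Let M be a G-graded pseudo weakly primeful R-module. The natural map φ : Υ_M → GWSpec(R/Ann(M)) given by φ(P) = (P :_R M)/Ann(M) is continuous with respect to the Zariski topologies; specifically, for any graded ideal K of R containing Ann(M), φ⁻¹(χ^{R*}(K/Ann(M))) = χ(KM). Consequently, if Υ_M is connected then GWSpec(R/Ann(M)) is connected. -/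
variable {G : Type*} [AddCommGroup G] [DecidableEq G]
variable {R : Type*} [CommRing R] (𝒜 : G → AddSubgroup R) [GradedRing 𝒜]
variable {M : Type*} [AddCommGroup M] [Module R M] (ℳ : G → AddSubgroup M)
  [SetLike.GradedSMul 𝒜 ℳ] [DirectSum.Decomposition ℳ]

/-- `I` corresponds to a graded weakly prime ideal of `R/A`: a proper graded ideal
containing `A` such that for homogeneous `a, b` with `a * b ∉ A` (i.e. the product is
nonzero mod `A`) and `a * b ∈ I`, either `a ∈ I` or `b ∈ I`. -/
def IsGWPrimeOver (A I : Ideal R) : Prop :=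
  IsGradedIdeal 𝒜 I ∧ I ≠ ⊤ ∧ A ≤ I ∧
    ∀ a b : R, SetLike.IsHomogeneousElem 𝒜 a → SetLike.IsHomogeneousElem 𝒜 b →
      a * b ∉ A → a * b ∈ I → a ∈ I ∨ b ∈ I

/-- `GWSpec(R/Ann(M))`, realized as the graded weakly prime ideals of `R/A`. -/
def GWSpecQ (A : Ideal R) := {I : Ideal R // IsGWPrimeOver 𝒜 A I}

/-- The Zariski topology on `GWSpec(R/A)`. -/
def zariskiQ (A : Ideal R) : TopologicalSpace (GWSpecQ 𝒜 A) :=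
  TopologicalSpace.generateFrom
    {U | ∃ K : Ideal R, IsGradedIdeal 𝒜 K ∧ A ≤ K ∧
      U = {J : GWSpecQ 𝒜 A | K ≤ J.1}ᶜ}


section Aux
open DirectSum

lemma decompose_mem_of_homog (N : Submodule R M) {t : M}
    (ht : SetLike.IsHomogeneousElem ℳ t) (htN : t ∈ N) (g : G) :
    (DirectSum.decompose ℳ t g : M) ∈ N := by
  obtain ⟨c, hc⟩ := ht
  by_cases hg : c = g
  · subst hg
    rw [DirectSum.decompose_of_mem_same ℳ hc]
    exact htN
  · rw [DirectSum.decompose_of_mem_ne ℳ hc hg]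
    exact N.zero_mem

lemma decompose_finset_sum {ι : Type*} (s : Finset ι) (f : ι → M) (g : G) :
    (DirectSum.decompose ℳ (∑ i ∈ s, f i) g : M)
      = ∑ i ∈ s, (DirectSum.decompose ℳ (f i) g : M) := by
  classical
  induction s using Finset.induction_on with
  | empty => simp
  | insert _ _ h ih =>
    rw [Finset.sum_insert h, Finset.sum_insert h, DirectSum.decompose_add,
      DirectSum.add_apply, AddSubgroup.coe_add, ih]

lemma smul_top_graded {K : Ideal R} (hK : IsGradedIdeal 𝒜 K) :
    IsGradedSubmodule ℳ (K • (⊤ : Submodule R M)) := by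
  classical
  intro g x hx
  revert g
  refine Submodule.smul_induction_on hx (fun r hr n _ => ?_) (fun a b ha hb => ?_)
  · intro g
    have hr' : r • n = ∑ a ∈ (DirectSum.decompose 𝒜 r).support,
        ∑ b ∈ (DirectSum.decompose ℳ n).support,
          (DirectSum.decompose 𝒜 r a : R) • (DirectSum.decompose ℳ n b : M) := by
      conv_lhs => rw [← DirectSum.sum_support_decompose 𝒜 r,
        ← DirectSum.sum_support_decompose ℳ n]
      rw [Finset.sum_smul]
      exact Finset.sum_congr rfl fun a _ => Finset.smul_sum
    rw [hr', decompose_finset_sum]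
    refine Submodule.sum_mem _ fun a _ => ?_
    rw [decompose_finset_sum]
    refine Submodule.sum_mem _ fun b _ => ?_
    exact decompose_mem_of_homog ℳ _ ⟨a + b, SetLike.GradedSMul.smul_mem (A := 𝒜) (B := ℳ)
        (DirectSum.decompose 𝒜 r a).2 (DirectSum.decompose ℳ n b).2⟩
      (Submodule.smul_mem_smul (hK a r hr) Submodule.mem_top) g
  · intro g
    rw [DirectSum.decompose_add, DirectSum.add_apply, AddSubgroup.coe_add]
    exact Submodule.add_mem _ (ha g) (hb g)

lemma colon_iff_smul_le {K : Ideal R} {N : Submodule R M} :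
    K ≤ N.colon ⊤ ↔ K • (⊤ : Submodule R M) ≤ N := by
  rw [Submodule.smul_le]
  constructor
  · intro h r hr m hm
    exact Submodule.mem_colon.mp (h hr) m hm
  · intro h r hr
    exact Submodule.mem_colon.mpr fun m hm => h r hr m hm

end Aux

/-- The natural map `φ : Υ_M → GWSpec(R/Ann(M))`, `φ(P) = (P :_R M)/Ann(M)`, of a
graded pseudo weakly primeful module satisfies `φ⁻¹(χ^{R*}(K*)) = χ(KM)`, is
continuous, and transfers connectedness. -/
theorem stmt8 (h : IsGWTopologicalModule 𝒜 ℳ)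
    (φ : Ups 𝒜 ℳ → GWSpecQ 𝒜 ((⊥ : Submodule R M).colon ⊤))
    (hφ : ∀ P : Ups 𝒜 ℳ, (φ P).1 = P.1.colon ⊤)
    (hsurj : Function.Surjective φ) :
    (∀ K : Ideal R, IsGradedIdeal 𝒜 K → (⊥ : Submodule R M).colon ⊤ ≤ K →
        φ ⁻¹' {J : GWSpecQ 𝒜 ((⊥ : Submodule R M).colon ⊤) | K ≤ J.1}
          = chiT 𝒜 ℳ (K • (⊤ : Submodule R M))) ∧
    @Continuous _ _ (zariski 𝒜 ℳ) (zariskiQ 𝒜 ((⊥ : Submodule R M).colon ⊤)) φ ∧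
    (@ConnectedSpace (Ups 𝒜 ℳ) (zariski 𝒜 ℳ) →
      @ConnectedSpace (GWSpecQ 𝒜 ((⊥ : Submodule R M).colon ⊤))
        (zariskiQ 𝒜 ((⊥ : Submodule R M).colon ⊤))) := by
  have part1 : ∀ K : Ideal R, IsGradedIdeal 𝒜 K → (⊥ : Submodule R M).colon ⊤ ≤ K →
      φ ⁻¹' {J : GWSpecQ 𝒜 ((⊥ : Submodule R M).colon ⊤) | K ≤ J.1}
        = chiT 𝒜 ℳ (K • (⊤ : Submodule R M)) := by
    intro K hK hAK
    ext P
    simp only [Set.mem_preimage, Set.mem_setOf_eq, chiT, hφ P]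
    exact colon_iff_smul_le
  have part2 : @Continuous _ _ (zariski 𝒜 ℳ)
      (zariskiQ 𝒜 ((⊥ : Submodule R M).colon ⊤)) φ := by
    unfold zariskiQ
    rw [continuous_generateFrom_iff]
    rintro U ⟨K, hK, hAK, rfl⟩
    rw [Set.preimage_compl, part1 K hK hAK]
    exact TopologicalSpace.GenerateOpen.basic _
      ⟨K • ⊤, smul_top_graded 𝒜 ℳ hK, rfl⟩
  refine ⟨part1, part2, fun hconn => ?_⟩
  exact @Function.Surjective.connectedSpace _ _ (zariski 𝒜 ℳ) hconn
    (zariskiQ 𝒜 ((⊥ : Submodule R M).colon ⊤)) φ hsurj part2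
end

section
/- Υ_M with the Zariski topology is a T₁-space if and only if for every C ∈ Υ_M, (C :_R M) is a maximal element of Ω = {(D :_R M) : D ∈ Υ_M} and |Υ_{M,p}| ≤ 1 for every graded weakly prime ideal p of R. -/
variable {G : Type*} [AddCommGroup G] [DecidableEq G]
variable {R : Type*} [CommRing R] (𝒜 : G → AddSubgroup R) [GradedRing 𝒜]
variable {M : Type*} [AddCommGroup M] [Module R M] (ℳ : G → AddSubgroup M)
  [SetLike.GradedSMul 𝒜 ℳ] [DirectSum.Decomposition ℳ]

/-- `Υ_M` is `T₁` iff every `(C :_R M)` is maximal in `Ω = {(D :_R M) : D ∈ Υ_M}` and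
`|Υ_{M,p}| ≤ 1` for every graded weakly prime ideal `p`. -/
theorem stmt13 (h : IsGWTopologicalModule 𝒜 ℳ) :
    @T1Space (Ups 𝒜 ℳ) (zariski 𝒜 ℳ) ↔
      ((∀ C D : Ups 𝒜 ℳ, C.1.colon ⊤ ≤ D.1.colon ⊤ → C.1.colon ⊤ = D.1.colon ⊤) ∧
       (∀ p : Ideal R, IsGWPrimeIdeal 𝒜 p →
         ∀ Q Q' : Ups 𝒜 ℳ, Q.1.colon ⊤ = p → Q'.1.colon ⊤ = p → Q = Q')) := by
  have colon_mono : ∀ {N P : Submodule R M}, N ≤ P → N.colon ⊤ ≤ P.colon ⊤ := by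
    intro N P hNP r hr
    exact Submodule.mem_colon.mpr fun m hm => hNP (Submodule.mem_colon.mp hr m hm)
  constructor
  · intro ht
    -- From T1 we deduce the spectrum is an antichain for ≤.
    have key : ∀ C D : Ups 𝒜 ℳ, C.1 ≤ D.1 → C = D := by
      intro C D hle
      by_contra hne
      have hcl : @IsClosed _ (zariski 𝒜 ℳ) {C} := @T1Space.t1 _ (zariski 𝒜 ℳ) ht C
      have hop : TopologicalSpace.GenerateOpen
          {U | ∃ N : Submodule R M, IsGradedSubmodule ℳ N ∧ U = (chiT 𝒜 ℳ N)ᶜ}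
          ({C} : Set (Ups 𝒜 ℳ))ᶜ := @IsClosed.isOpen_compl _ (zariski 𝒜 ℳ) _ hcl
      have mono : ∀ U : Set (Ups 𝒜 ℳ),
          TopologicalSpace.GenerateOpen
            {U | ∃ N : Submodule R M, IsGradedSubmodule ℳ N ∧ U = (chiT 𝒜 ℳ N)ᶜ} U →
          D ∈ U → C ∈ U := by
        intro U hU
        induction hU with
        | basic V hV =>
          obtain ⟨N, -, rfl⟩ := hV
          intro hD hC
          exact hD (le_trans (hC : N ≤ C.1) hle)
        | univ => intro _; trivial
        | inter V W _ _ ihV ihW => intro hD; exact ⟨ihV hD.1, ihW hD.2⟩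
        | sUnion S _ ih =>
          rintro ⟨s, hs, hDs⟩
          exact ⟨s, hs, ih s hs hDs⟩
      exact (mono _ hop (fun hD => hne (hD.symm))) rfl
    -- The main consequence: colon-comparable points are equal.
    have main : ∀ C D : Ups 𝒜 ℳ, C.1.colon ⊤ ≤ D.1.colon ⊤ → C = D := by
      intro C D hcol
      have hcolon_inf : (C.1 ⊓ D.1).colon ⊤ = C.1.colon ⊤ := by
        apply le_antisymm (colon_mono inf_le_left)
        intro r hr
        refine Submodule.mem_colon.mpr fun m hm => ?_
        exact ⟨Submodule.mem_colon.mp hr m hm, Submodule.mem_colon.mp (hcol hr) m hm⟩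
      have hE : IsGPWPrime 𝒜 ℳ (C.1 ⊓ D.1) := by
        refine ⟨?_, ?_⟩
        · intro g m hm
          exact ⟨C.2.1 g m hm.1, D.2.1 g m hm.2⟩
        · rw [hcolon_inf]; exact C.2.2
      set E : Ups 𝒜 ℳ := ⟨C.1 ⊓ D.1, hE⟩ with hEdef
      have h1 : E = C := key E C inf_le_left
      have h2 : E = D := key E D inf_le_right
      exact h1.symm.trans h2
    constructor
    · intro C D hcol
      rw [main C D hcol]
    · intro p _ Q Q' h1 h2
      exact main Q Q' (le_of_eq (h1.trans h2.symm))
  · rintro ⟨ha, hb⟩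
    refine @T1Space.mk _ (zariski 𝒜 ℳ) fun C => ?_
    have hset : ({C} : Set (Ups 𝒜 ℳ)) = chiT 𝒜 ℳ C.1 := by
      ext D
      constructor
      · intro hD; show C.1 ≤ D.1; rw [show D = C from hD]
      · intro hD
        have hcol : C.1.colon ⊤ ≤ D.1.colon ⊤ := colon_mono hD
        have heq : C.1.colon ⊤ = D.1.colon ⊤ := ha C D hcol
        show D = C
        exact hb (C.1.colon ⊤) C.2.2 D C heq.symm rfl
    rw [hset]
    exact @IsClosed.mk _ (zariski 𝒜 ℳ) _
      (TopologicalSpace.GenerateOpen.basic _ ⟨C.1, C.2.1, rfl⟩)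
end

section
/- For a graded submodule N of M, the closed set χ(N) is an irreducible subspace of Υ_M if and only if GPWrad(N) = η(χ(N)) is a graded pseudo weakly prime submodule of M. In particular, Υ_M is irreducible if and only if GPWrad({0}) is a graded pseudo weakly prime submodule. -/
variable {G : Type*} [AddCommGroup G] [DecidableEq G]
variable {R : Type*} [CommRing R] (𝒜 : G → AddSubgroup R) [GradedRing 𝒜]
variable {M : Type*} [AddCommGroup M] [Module R M] (ℳ : G → AddSubgroup M)
  [SetLike.GradedSMul 𝒜 ℳ] [DirectSum.Decomposition ℳ]

set_option linter.unusedSectionVars false in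
lemma decompose_smul_homog {i : G} {a : R} (ha : a ∈ 𝒜 i) (m : M) (g : G) :
    (DirectSum.decompose ℳ (a • m) (i + g) : M) = a • (DirectSum.decompose ℳ m g : M) := by
  induction m using DirectSum.Decomposition.inductionOn ℳ with
  | zero => simp
  | @homogeneous j x =>
      have hmem : a • (x : M) ∈ ℳ (i + j) := SetLike.GradedSMul.smul_mem ha x.2
      by_cases hg : g = j
      · subst hg
        rw [DirectSum.decompose_of_mem_same ℳ (x := a • (x : M)) hmem,
          DirectSum.decompose_of_mem_same ℳ x.2]
      · rw [DirectSum.decompose_of_mem_ne ℳ x.2 (Ne.symm hg),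
          DirectSum.decompose_of_mem_ne ℳ hmem (fun hc => hg (add_left_cancel hc).symm),
          smul_zero]
  | add m m' hm hm' =>
      rw [smul_add, DirectSum.decompose_add, DirectSum.decompose_add, DirectSum.add_apply,
        DirectSum.add_apply, AddSubgroup.coe_add, AddSubgroup.coe_add, hm, hm', smul_add]

lemma main_lemma (N : Submodule R M) :
    @IsIrreducible _ (zariski 𝒜 ℳ) (chiT 𝒜 ℳ N) ↔
      IsGPWPrime 𝒜 ℳ (sInf {Q : Submodule R M | IsGPWPrime 𝒜 ℳ Q ∧ N ≤ Q}) := by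
  letI := zariski 𝒜 ℳ
  set S := {Q : Submodule R M | IsGPWPrime 𝒜 ℳ Q ∧ N ≤ Q} with hSdef
  set P := sInf S with hPdef
  have hPc : ∀ r : R, (r ∈ P.colon ⊤ ↔ ∀ Q ∈ S, r ∈ Q.colon ⊤) := by
    intro r
    constructor
    · intro hr Q hQ
      rw [Submodule.mem_colon] at hr ⊢
      intro p hp
      exact Submodule.mem_sInf.mp (hr p hp) Q hQ
    · intro hr
      rw [Submodule.mem_colon]
      intro p hp
      rw [Submodule.mem_sInf]
      intro Q hQ
      exact Submodule.mem_colon.mp (hr Q hQ) p hp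
  constructor
  · rintro ⟨⟨q0, hq0⟩, hpre⟩
    have hq0S : q0.1 ∈ S := ⟨q0.2, hq0⟩
    refine ⟨?_, ?_, ?_, ?_⟩
    · -- graded submodule
      intro g m hm
      rw [Submodule.mem_sInf] at hm ⊢
      intro Q hQ
      exact hQ.1.1 g m (hm Q hQ)
    · -- graded ideal
      intro g r hr
      rw [hPc] at hr ⊢
      intro Q hQ
      exact hQ.1.2.1 g r (hr Q hQ)
    · -- proper
      intro heq
      have h1 : (1 : R) ∈ P.colon ⊤ := heq ▸ Submodule.mem_top
      exact q0.2.2.2.1 ((Ideal.eq_top_iff_one _).mpr ((hPc 1).mp h1 q0.1 hq0S))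
    · -- weakly prime
      intro a b ha hb hab habP
      obtain ⟨ia, haa⟩ := ha
      obtain ⟨ib, hbb⟩ := hb
      set Aa := LinearMap.range (LinearMap.lsmul R M a) with hAadef
      set Ab := LinearMap.range (LinearMap.lsmul R M b) with hAbdef
      have hle : ∀ (c : R) (Q : Submodule R M),
          LinearMap.range (LinearMap.lsmul R M c) ≤ Q ↔ c ∈ Q.colon ⊤ := by
        intro c Q
        constructor
        · intro h
          exact Submodule.mem_colon.mpr fun p _ => h ⟨p, rfl⟩
        · intro h x hx
          obtain ⟨m, rfl⟩ := hx
          exact Submodule.mem_colon.mp h m (Set.mem_univ m)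
      have hgr : ∀ (i : G) (c : R), c ∈ 𝒜 i →
          IsGradedSubmodule ℳ (LinearMap.range (LinearMap.lsmul R M c)) := by
        intro i c hc g x hx
        obtain ⟨m, rfl⟩ := hx
        have h2 : i + (g - i) = g := by abel
        rw [LinearMap.lsmul_apply, ← h2, decompose_smul_homog 𝒜 ℳ hc]
        exact ⟨_, rfl⟩
      have hclosed : ∀ (K : Submodule R M), IsGradedSubmodule ℳ K →
          IsClosed (chiT 𝒜 ℳ K) := by
        intro K hK
        rw [← isOpen_compl_iff]
        exact TopologicalSpace.GenerateOpen.basic _ ⟨K, hK, rfl⟩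
      have hcover : chiT 𝒜 ℳ N ⊆ chiT 𝒜 ℳ Aa ∪ chiT 𝒜 ℳ Ab := by
        intro q hq
        have hqS : q.1 ∈ S := ⟨q.2, hq⟩
        have habq : a * b ∈ q.1.colon ⊤ := (hPc (a * b)).mp habP q.1 hqS
        rcases q.2.2.2.2 a b ⟨ia, haa⟩ ⟨ib, hbb⟩ hab habq with h | h
        · exact Or.inl ((hle a q.1).mpr h)
        · exact Or.inr ((hle b q.1).mpr h)
      rcases (isPreirreducible_iff_isClosed_union_isClosed.mp hpre) _ _
          (hclosed Aa (hgr ia a haa)) (hclosed Ab (hgr ib b hbb)) hcover with hsub | hsub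
      · left
        rw [hPc]
        intro Q hQ
        exact (hle a Q).mp (hsub (show (⟨Q, hQ.1⟩ : Ups 𝒜 ℳ) ∈ chiT 𝒜 ℳ N from hQ.2))
      · right
        rw [hPc]
        intro Q hQ
        exact (hle b Q).mp (hsub (show (⟨Q, hQ.1⟩ : Ups 𝒜 ℳ) ∈ chiT 𝒜 ℳ N from hQ.2))
  · intro hPprime
    have hNP : N ≤ P := le_sInf fun Q hQ => hQ.2
    have hPS : P ∈ S := ⟨hPprime, hNP⟩
    set p : Ups 𝒜 ℳ := ⟨P, hPprime⟩ with hpdef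
    have hpN : p ∈ chiT 𝒜 ℳ N := hNP
    have hgen : ∀ U : Set (Ups 𝒜 ℳ),
        TopologicalSpace.GenerateOpen
          {U | ∃ K : Submodule R M, IsGradedSubmodule ℳ K ∧ U = (chiT 𝒜 ℳ K)ᶜ} U →
        ∀ q : Ups 𝒜 ℳ, q ∈ chiT 𝒜 ℳ N → q ∈ U → p ∈ U := by
      intro U hU
      induction hU with
      | basic V hV =>
          intro q hq hqV
          obtain ⟨K, hK, rfl⟩ := hV
          intro hcon
          exact hqV (show K ≤ q.1 from
            le_trans (show K ≤ P from hcon) (sInf_le (⟨q.2, hq⟩ : q.1 ∈ S)))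
      | univ => intro q _ _; trivial
      | inter U V _ _ ihU ihV =>
          intro q hq hqm
          exact ⟨ihU q hq hqm.1, ihV q hq hqm.2⟩
      | sUnion s _ ih =>
          intro q hq hqm
          obtain ⟨t, ht, hqt⟩ := hqm
          exact ⟨t, ht, ih t ht q hq hqt⟩
    refine ⟨⟨p, hpN⟩, ?_⟩
    rintro u v hu hv ⟨q1, hq1s, hq1u⟩ ⟨q2, hq2s, hq2v⟩
    exact ⟨p, hpN, hgen u hu q1 hq1s hq1u, hgen v hv q2 hq2s hq2v⟩

/-- `χ(N)` is irreducible iff `GPWrad(N)` is graded pseudo weakly prime; in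
particular `Υ_M` is irreducible iff `GPWrad({0})` is graded pseudo weakly prime. -/
theorem stmt15 (h : IsGWTopologicalModule 𝒜 ℳ) (N : Submodule R M)
    (hN : IsGradedSubmodule ℳ N) :
    (@IsIrreducible _ (zariski 𝒜 ℳ) (chiT 𝒜 ℳ N) ↔
      IsGPWPrime 𝒜 ℳ (sInf {Q : Submodule R M | IsGPWPrime 𝒜 ℳ Q ∧ N ≤ Q})) ∧
    (@IsIrreducible _ (zariski 𝒜 ℳ) (Set.univ : Set (Ups 𝒜 ℳ)) ↔
      IsGPWPrime 𝒜 ℳ (sInf {Q : Submodule R M | IsGPWPrime 𝒜 ℳ Q})) := by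
  refine ⟨main_lemma 𝒜 ℳ N, ?_⟩
  have hbot : IsGradedSubmodule ℳ (⊥ : Submodule R M) := by
    intro g m hm
    rw [Submodule.mem_bot] at hm ⊢
    rw [hm]
    simp
  have h0 : chiT 𝒜 ℳ (⊥ : Submodule R M) = (Set.univ : Set (Ups 𝒜 ℳ)) := by
    ext q
    simp [chiT, bot_le]
  have h1 : {Q : Submodule R M | IsGPWPrime 𝒜 ℳ Q ∧ (⊥ : Submodule R M) ≤ Q} =
      {Q : Submodule R M | IsGPWPrime 𝒜 ℳ Q} := by
    ext Q
    simp [bot_le]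
  rw [← h0, ← h1]
  exact main_lemma 𝒜 ℳ ⊥
end

section
/- If Υ_{M,J} ≠ ∅ for some graded weakly prime ideal J of R, then Υ_{M,J} is an irreducible subspace of Υ_M; in particular η(Υ_{M,J}) is a graded pseudo weakly prime submodule since (η(Υ_{M,J}) :_R M) = J. -/
variable {G : Type*} [AddCommGroup G] [DecidableEq G]
variable {R : Type*} [CommRing R] (𝒜 : G → AddSubgroup R) [GradedRing 𝒜]
variable {M : Type*} [AddCommGroup M] [Module R M] (ℳ : G → AddSubgroup M)
  [SetLike.GradedSMul 𝒜 ℳ] [DirectSum.Decomposition ℳ]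

/-- If `Υ_{M,J} ≠ ∅` for a graded weakly prime ideal `J`, then `Υ_{M,J}` is an
irreducible subspace of `Υ_M`; in particular `η(Υ_{M,J})` is a graded pseudo weakly
prime submodule, since `(η(Υ_{M,J}) :_R M) = J`. -/
theorem stmt16 (h : IsGWTopologicalModule 𝒜 ℳ) (J : Ideal R)
    (hJ : IsGWPrimeIdeal 𝒜 J)
    (hne : {P : Ups 𝒜 ℳ | P.1.colon ⊤ = J}.Nonempty) :
    @IsIrreducible _ (zariski 𝒜 ℳ) {P : Ups 𝒜 ℳ | P.1.colon ⊤ = J} ∧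
    IsGPWPrime 𝒜 ℳ (sInf (Subtype.val '' {P : Ups 𝒜 ℳ | P.1.colon ⊤ = J})) ∧
    (sInf (Subtype.val '' {P : Ups 𝒜 ℳ | P.1.colon ⊤ = J})).colon ⊤ = J := by
  set S : Set (Ups 𝒜 ℳ) := {P : Ups 𝒜 ℳ | P.1.colon ⊤ = J} with hS
  set K : Submodule R M := sInf (Subtype.val '' S) with hK
  obtain ⟨P1, hP1⟩ := hne
  have hP1' : P1.1.colon ⊤ = J := hP1
  have hle : ∀ P ∈ S, K ≤ P.1 := fun P hP => sInf_le ⟨P, hP, rfl⟩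
  have hcolon : K.colon ⊤ = J := by
    apply le_antisymm
    · intro r hr
      rw [← hP1']
      rw [Submodule.mem_colon] at hr ⊢
      intro m hm
      exact hle P1 hP1 (hr m hm)
    · intro r hr
      rw [Submodule.mem_colon]
      intro m hm
      rw [Submodule.mem_sInf]
      rintro p ⟨P, hPS, rfl⟩
      have hPJ : P.1.colon ⊤ = J := hPS
      exact Submodule.mem_colon.mp (hPJ ▸ hr) m hm
  have hgr : IsGradedSubmodule ℳ K := by
    intro g m hm
    rw [Submodule.mem_sInf] at hm ⊢
    rintro p ⟨P, hPS, rfl⟩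
    exact P.2.1 g m (hm P.1 ⟨P, hPS, rfl⟩)
  have hprime : IsGPWPrime 𝒜 ℳ K := ⟨hgr, by rw [hcolon]; exact hJ⟩
  have hP0S : (⟨K, hprime⟩ : Ups 𝒜 ℳ) ∈ S := hcolon
  have key : ∀ U : Set (Ups 𝒜 ℳ),
      TopologicalSpace.GenerateOpen
        {U | ∃ N : Submodule R M, IsGradedSubmodule ℳ N ∧ U = (chiT 𝒜 ℳ N)ᶜ} U →
      ∀ P : Ups 𝒜 ℳ, K ≤ P.1 → P ∈ U → (⟨K, hprime⟩ : Ups 𝒜 ℳ) ∈ U := by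
    intro U hU
    induction hU with
    | basic U hUb =>
        rintro P hKP hPU
        obtain ⟨N, hN, rfl⟩ := hUb
        intro hcon
        exact hPU (le_trans hcon hKP)
    | univ => intro P _ _; trivial
    | inter U V _ _ ihU ihV =>
        intro P hKP hPU
        exact ⟨ihU P hKP hPU.1, ihV P hKP hPU.2⟩
    | sUnion Us hUs ih =>
        rintro P hKP ⟨U, hUUs, hPU⟩
        exact ⟨U, hUUs, ih U hUUs P hKP hPU⟩
  refine ⟨⟨⟨P1, hP1⟩, ?_⟩, hprime, hcolon⟩
  rintro U V hU hV ⟨PU, hPUS, hPUU⟩ ⟨PV, hPVS, hPVV⟩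
  exact ⟨⟨K, hprime⟩, hP0S,
    key U hU PU (hle PU hPUS) hPUU, key V hV PV (hle PV hPVS) hPVV⟩
end

section
/- A subset W ⊆ Υ_M is an irreducible closed subset of Υ_M if and only if W = χ(I) for some I ∈ Υ_M. Consequently every irreducible closed subset of Υ_M has a generic point, and the correspondence χ(I) ↦ I is a bijection from the set of irreducible components of Υ_M onto the set of minimal elements of Υ_M. -/
variable {G : Type*} [AddCommGroup G] [DecidableEq G]
variable {R : Type*} [CommRing R] (𝒜 : G → AddSubgroup R) [GradedRing 𝒜]
variable {M : Type*} [AddCommGroup M] [Module R M] (ℳ : G → AddSubgroup M)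
  [SetLike.GradedSMul 𝒜 ℳ] [DirectSum.Decomposition ℳ]

/-! ### Auxiliary lemmas -/

lemma aux_isClosed_chiT {N : Submodule R M} (hN : IsGradedSubmodule ℳ N) :
    @IsClosed _ (zariski 𝒜 ℳ) (chiT 𝒜 ℳ N) := by
  letI := zariski 𝒜 ℳ
  constructor
  exact TopologicalSpace.isOpen_generateFrom_of_mem ⟨N, hN, rfl⟩

lemma mem_chiT {N : Submodule R M} {Q : Ups 𝒜 ℳ} : Q ∈ chiT 𝒜 ℳ N ↔ N ≤ Q.1 := Iff.rfl

lemma aux_open_down {U : Set (Ups 𝒜 ℳ)} (hU : @IsOpen _ (zariski 𝒜 ℳ) U)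
    {P Q : Ups 𝒜 ℳ} (hPQ : P.1 ≤ Q.1) (hQ : Q ∈ U) : P ∈ U := by
  have hU' : TopologicalSpace.GenerateOpen
      {U | ∃ N : Submodule R M, IsGradedSubmodule ℳ N ∧ U = (chiT 𝒜 ℳ N)ᶜ} U := hU
  clear hU
  induction hU' with
  | basic V hV =>
    obtain ⟨N, hN, rfl⟩ := hV
    intro hNP
    exact hQ (le_trans (mem_chiT 𝒜 ℳ |>.1 hNP) hPQ)
  | univ => trivial
  | inter U V _ _ ihU ihV => exact ⟨ihU hQ.1, ihV hQ.2⟩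
  | sUnion S _ ih =>
    obtain ⟨V, hVS, hQV⟩ := hQ
    exact ⟨V, hVS, ih V hVS hQV⟩

lemma aux_closure_singleton (I : Ups 𝒜 ℳ) :
    @closure _ (zariski 𝒜 ℳ) {I} = chiT 𝒜 ℳ I.1 := by
  letI := zariski 𝒜 ℳ
  apply subset_antisymm
  · exact closure_minimal (Set.singleton_subset_iff.2 ((mem_chiT 𝒜 ℳ).2 le_rfl)) (aux_isClosed_chiT 𝒜 ℳ I.2.1)
  · intro Q hQ
    rw [mem_closure_iff]
    intro U hU hQU
    exact ⟨I, aux_open_down 𝒜 ℳ hU hQ hQU, rfl⟩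

lemma aux_decompose_smul {a : R} {g : G} (ha : a ∈ 𝒜 g) (m : M) :
    ∀ k : G, ∃ m' : M, (DirectSum.decompose ℳ (a • m) k : M) = a • m' := by
  refine DirectSum.Decomposition.inductionOn ℳ
    (motive := fun m => ∀ k : G, ∃ m' : M, (DirectSum.decompose ℳ (a • m) k : M) = a • m')
    ?_ ?_ ?_ m
  · intro k
    refine ⟨0, ?_⟩
    rw [smul_zero, DirectSum.decompose_zero]
    simp only [DirectSum.zero_apply, ZeroMemClass.coe_zero]
  · intro i x k
    have hmem : a • (x : M) ∈ ℳ (g + i) := SetLike.GradedSMul.smul_mem ha x.2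
    by_cases h : g + i = k
    · subst h
      exact ⟨x, DirectSum.decompose_of_mem_same ℳ hmem⟩
    · exact ⟨0, by rw [DirectSum.decompose_of_mem_ne ℳ hmem h, smul_zero]⟩
  · intro m n hm hn k
    obtain ⟨m', hm'⟩ := hm k
    obtain ⟨n', hn'⟩ := hn k
    refine ⟨m' + n', ?_⟩
    rw [smul_add, DirectSum.decompose_add]
    simp only [DirectSum.add_apply, AddSubgroup.coe_add, hm', hn', smul_add]

lemma aux_graded_aTop {a : R} (ha : SetLike.IsHomogeneousElem 𝒜 a) :
    IsGradedSubmodule ℳ (Ideal.span {a} • (⊤ : Submodule R M)) := by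
  obtain ⟨g, hg⟩ := ha
  intro k x hx
  refine Submodule.smul_induction_on hx ?_ ?_
  · intro r hr n _
    obtain ⟨c, rfl⟩ := Ideal.mem_span_singleton'.1 hr
    rw [mul_comm, mul_smul]
    obtain ⟨m', hm'⟩ := aux_decompose_smul 𝒜 ℳ hg (c • n) k
    rw [hm']
    exact Submodule.smul_mem_smul (Ideal.mem_span_singleton_self a) Submodule.mem_top
  · intro x y hxk hyk
    rw [DirectSum.decompose_add]
    simp only [DirectSum.add_apply, AddSubgroup.coe_add]
    exact Submodule.add_mem _ hxk hyk

lemma aux_colon_iff {a : R} {Q : Submodule R M} :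
    a ∈ Q.colon ⊤ ↔ Ideal.span {a} • (⊤ : Submodule R M) ≤ Q := by
  constructor
  · intro hcol
    rw [Submodule.smul_le]
    intro r hr n _
    obtain ⟨c, rfl⟩ := Ideal.mem_span_singleton'.1 hr
    rw [mul_smul]
    exact Q.smul_mem c (Submodule.mem_colon.1 hcol n trivial)
  · intro hle
    rw [Submodule.mem_colon]
    intro p _
    exact hle (Submodule.smul_mem_smul (Ideal.mem_span_singleton_self a) Submodule.mem_top)

lemma aux_key {W : Set (Ups 𝒜 ℳ)} (hirr : @IsIrreducible _ (zariski 𝒜 ℳ) W)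
    (hcl : @IsClosed _ (zariski 𝒜 ℳ) W) :
    ∃ I : Ups 𝒜 ℳ, W = chiT 𝒜 ℳ I.1 := by
  letI := zariski 𝒜 ℳ
  set N : Submodule R M := sInf (Subtype.val '' W) with hN
  have hmemN : ∀ m : M, m ∈ N ↔ ∀ Q ∈ W, m ∈ Q.1 := by
    intro m
    rw [Submodule.mem_sInf]
    constructor
    · intro hm Q hQ; exact hm Q.1 ⟨Q, hQ, rfl⟩
    · rintro hm P ⟨Q, hQ, rfl⟩; exact hm Q hQ
  have hcolmem : ∀ r : R, r ∈ N.colon ⊤ ↔ ∀ Q ∈ W, r ∈ Q.1.colon ⊤ := by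
    intro r
    rw [Submodule.mem_colon]
    constructor
    · intro hr Q hQ
      rw [Submodule.mem_colon]
      intro p hp
      exact (hmemN _).1 (hr p hp) Q hQ
    · intro hA p hp
      rw [hmemN]
      intro Q hQ
      exact Submodule.mem_colon.1 (hA Q hQ) p hp
  -- N is a graded pseudo weakly prime submodule
  have hNgr : IsGradedSubmodule ℳ N := by
    intro g m hm
    rw [hmemN] at hm ⊢
    exact fun Q hQ => Q.2.1 g m (hm Q hQ)
  have hIgr : IsGradedIdeal 𝒜 (N.colon ⊤) := by
    intro g r hr
    rw [hcolmem] at hr ⊢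
    exact fun Q hQ => Q.2.2.1 g r (hr Q hQ)
  obtain ⟨Q0, hQ0⟩ := hirr.1
  have hne : N.colon ⊤ ≠ ⊤ := by
    intro htop
    apply Q0.2.2.2.1
    rw [eq_top_iff]
    intro r _
    exact (hcolmem r).1 (htop ▸ Submodule.mem_top) Q0 hQ0
  have hwp : ∀ a b : R, SetLike.IsHomogeneousElem 𝒜 a → SetLike.IsHomogeneousElem 𝒜 b →
      a * b ≠ 0 → a * b ∈ N.colon ⊤ → a ∈ N.colon ⊤ ∨ b ∈ N.colon ⊤ := by
    intro a b ha hb hab habmem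
    by_contra hcon
    push_neg at hcon
    obtain ⟨hna, hnb⟩ := hcon
    rw [hcolmem] at hna hnb
    push_neg at hna hnb
    obtain ⟨Qa, hQaW, hQa⟩ := hna
    obtain ⟨Qb, hQbW, hQb⟩ := hnb
    have hUa : IsOpen ((chiT 𝒜 ℳ (Ideal.span {a} • (⊤ : Submodule R M)))ᶜ) :=
      TopologicalSpace.isOpen_generateFrom_of_mem ⟨_, aux_graded_aTop 𝒜 ℳ ha, rfl⟩
    have hUb : IsOpen ((chiT 𝒜 ℳ (Ideal.span {b} • (⊤ : Submodule R M)))ᶜ) :=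
      TopologicalSpace.isOpen_generateFrom_of_mem ⟨_, aux_graded_aTop 𝒜 ℳ hb, rfl⟩
    have hnea : (W ∩ (chiT 𝒜 ℳ (Ideal.span {a} • (⊤ : Submodule R M)))ᶜ).Nonempty :=
      ⟨Qa, hQaW, fun hmem => hQa (aux_colon_iff.2 ((mem_chiT 𝒜 ℳ).1 hmem))⟩
    have hneb : (W ∩ (chiT 𝒜 ℳ (Ideal.span {b} • (⊤ : Submodule R M)))ᶜ).Nonempty :=
      ⟨Qb, hQbW, fun hmem => hQb (aux_colon_iff.2 ((mem_chiT 𝒜 ℳ).1 hmem))⟩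
    obtain ⟨Q, hQW, hQa', hQb'⟩ := hirr.2 _ _ hUa hUb hnea hneb
    have habQ : a * b ∈ Q.1.colon ⊤ := (hcolmem (a * b)).1 habmem Q hQW
    rcases Q.2.2.2.2 a b ha hb hab habQ with h' | h'
    · exact hQa' ((mem_chiT 𝒜 ℳ).2 (aux_colon_iff.1 h'))
    · exact hQb' ((mem_chiT 𝒜 ℳ).2 (aux_colon_iff.1 h'))
  refine ⟨Subtype.mk N ⟨hNgr, hIgr, hne, hwp⟩, ?_⟩
  apply subset_antisymm
  · intro Q hQW
    exact (mem_chiT 𝒜 ℳ).2 (sInf_le ⟨Q, hQW, rfl⟩)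
  · intro Q hQ
    have claim : ∀ U : Set (Ups 𝒜 ℳ), TopologicalSpace.GenerateOpen
        {U | ∃ N' : Submodule R M, IsGradedSubmodule ℳ N' ∧ U = (chiT 𝒜 ℳ N')ᶜ} U →
        Q ∈ U → (W ∩ U).Nonempty := by
      intro U hU
      induction hU with
      | basic V hV =>
        obtain ⟨N', hN', rfl⟩ := hV
        intro hQU
        by_contra hemp
        apply hQU
        rw [mem_chiT]
        refine le_trans ?_ ((mem_chiT 𝒜 ℳ).1 hQ)
        apply le_sInf
        rintro P ⟨P', hP', rfl⟩
        by_contra h'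
        exact hemp ⟨P', hP', fun hmem => h' ((mem_chiT 𝒜 ℳ).1 hmem)⟩
      | univ => exact fun _ => (Set.inter_univ W).symm ▸ hirr.1
      | inter U V hUo hVo ihU ihV =>
        intro hQUV
        exact hirr.2 U V hUo hVo (ihU hQUV.1) (ihV hQUV.2)
      | sUnion S _ ih =>
        rintro ⟨U, hUS, hQU⟩
        obtain ⟨P, hPW, hPU⟩ := ih U hUS hQU
        exact ⟨P, hPW, U, hUS, hPU⟩
    have : Q ∈ closure W := by
      rw [mem_closure_iff]
      intro o ho hQo
      obtain ⟨P, hPW, hPo⟩ := claim o ho hQo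
      exact ⟨P, hPo, hPW⟩
    rwa [hcl.closure_eq] at this

lemma aux_chiT_irr (I : Ups 𝒜 ℳ) : @IsIrreducible _ (zariski 𝒜 ℳ) (chiT 𝒜 ℳ I.1) := by
  letI := zariski 𝒜 ℳ
  have := (isIrreducible_singleton (x := I)).closure
  rwa [aux_closure_singleton] at this

/-- `W ⊆ Υ_M` is an irreducible closed subset iff `W = χ(I)` for some `I ∈ Υ_M`;
every irreducible closed subset has a generic point; and `I ↦ χ(I)` is a bijection
from the minimal elements of `Υ_M` onto the irreducible components of `Υ_M`. -/
theorem stmt19 (h : IsGWTopologicalModule 𝒜 ℳ) :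
    (∀ W : Set (Ups 𝒜 ℳ),
      (@IsIrreducible _ (zariski 𝒜 ℳ) W ∧ @IsClosed _ (zariski 𝒜 ℳ) W) ↔
        ∃ I : Ups 𝒜 ℳ, W = chiT 𝒜 ℳ I.1) ∧
    (∀ W : Set (Ups 𝒜 ℳ), @IsIrreducible _ (zariski 𝒜 ℳ) W →
      @IsClosed _ (zariski 𝒜 ℳ) W → ∃ x ∈ W, @closure _ (zariski 𝒜 ℳ) {x} = W) ∧
    Set.BijOn (fun I : Ups 𝒜 ℳ => chiT 𝒜 ℳ I.1)
      {I : Ups 𝒜 ℳ | ∀ J : Ups 𝒜 ℳ, J.1 ≤ I.1 → J = I}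
      (@irreducibleComponents (Ups 𝒜 ℳ) (zariski 𝒜 ℳ)) := by
  letI := zariski 𝒜 ℳ
  have main : ∀ W : Set (Ups 𝒜 ℳ),
      (@IsIrreducible _ (zariski 𝒜 ℳ) W ∧ @IsClosed _ (zariski 𝒜 ℳ) W) ↔
        ∃ I : Ups 𝒜 ℳ, W = chiT 𝒜 ℳ I.1 := by
    intro W
    constructor
    · rintro ⟨hirr, hcl⟩
      exact aux_key 𝒜 ℳ hirr hcl
    · rintro ⟨I, rfl⟩
      exact ⟨aux_chiT_irr 𝒜 ℳ I, aux_isClosed_chiT 𝒜 ℳ I.2.1⟩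
  refine ⟨main, ?_, ?_, ?_, ?_⟩
  · intro W hirr hcl
    obtain ⟨I, rfl⟩ := aux_key 𝒜 ℳ hirr hcl
    exact ⟨I, (mem_chiT 𝒜 ℳ).2 le_rfl, aux_closure_singleton 𝒜 ℳ I⟩
  · -- MapsTo
    intro I hmin
    refine ⟨aux_chiT_irr 𝒜 ℳ I, ?_⟩
    intro t ht hsub
    have hclt : IsIrreducible (closure t) ∧ IsClosed (closure t) := ⟨ht.closure, isClosed_closure⟩
    obtain ⟨J, hJ⟩ := (main (closure t)).1 hclt
    have hIJ : J.1 ≤ I.1 := by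
      have : I ∈ chiT 𝒜 ℳ J.1 := hJ ▸ subset_closure (hsub ((mem_chiT 𝒜 ℳ).2 le_rfl))
      exact (mem_chiT 𝒜 ℳ).1 this
    have hJI : J = I := hmin J hIJ
    calc t ⊆ closure t := subset_closure
    _ = chiT 𝒜 ℳ J.1 := hJ
    _ = chiT 𝒜 ℳ I.1 := by rw [hJI]
  · -- InjOn
    intro I _ J _ hIJ
    have hIJ' : chiT 𝒜 ℳ I.1 = chiT 𝒜 ℳ J.1 := hIJ
    have h1 : J.1 ≤ I.1 := by
      have : I ∈ chiT 𝒜 ℳ J.1 := hIJ' ▸ ((mem_chiT 𝒜 ℳ).2 (le_rfl (a := I.1)))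
      exact (mem_chiT 𝒜 ℳ).1 this
    have h2 : I.1 ≤ J.1 := by
      have : J ∈ chiT 𝒜 ℳ I.1 := hIJ'.symm ▸ ((mem_chiT 𝒜 ℳ).2 (le_rfl (a := J.1)))
      exact (mem_chiT 𝒜 ℳ).1 this
    exact Subtype.ext (le_antisymm h2 h1)
  · -- SurjOn
    intro W hW
    have hcl : IsClosed W := isClosed_of_mem_irreducibleComponents W hW
    obtain ⟨I, rfl⟩ := aux_key 𝒜 ℳ hW.1 hcl
    refine ⟨I, ?_, rfl⟩
    intro J hJI
    have hsub : chiT 𝒜 ℳ I.1 ⊆ chiT 𝒜 ℳ J.1 := fun Q hQ =>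
      (mem_chiT 𝒜 ℳ).2 (le_trans hJI ((mem_chiT 𝒜 ℳ).1 hQ))
    have hback : chiT 𝒜 ℳ J.1 ⊆ chiT 𝒜 ℳ I.1 := hW.2 (aux_chiT_irr 𝒜 ℳ J) hsub
    have h3 : J ∈ chiT 𝒜 ℳ I.1 := hback ((mem_chiT 𝒜 ℳ).2 le_rfl)
    exact Subtype.ext (le_antisymm hJI ((mem_chiT 𝒜 ℳ).1 h3))
end
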